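/- arXiv:2311.07890 — 5 statements merged into one kernel-verified Lean document; each statement's English description precedes it below -/
import Mathlib

section
/- Let f be holomorphic on the horizontal strip Ω = {z ∈ ℂ : |Im z| ≤ 2w} for some w > 0, and suppose that for every k ∈ ℕ there is a constant M_k > 0 with |f(z) z^k| ≤ M_k for all z ∈ Ω. Then for every k ∈ ℕ there exists p_k > 0 such that the k-th derivative of the Fourier transform of f (restricted to ℝ) satisfies |f̂^(k)(s)| ≤ p_k · exp(−w·|s|) for all s ∈ ℝ. -/
/-!
After a rescaling, `fourierHat` is Mathlib's Fourier transform, so the decay of `f` on the real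
line gives `f̂⁽ᵏ⁾ = ĝ` with `g z = (-i z)ᵏ f z`. The bounds on `f z * z ^ k` and `f z * z ^ (k + 2)`
make `g` decay like `1 / (1 + (Re z)²)` on the strip. By Cauchy's theorem on rectangles, whose
vertical sides vanish in the limit, the integral of `e^{-isz} g z` over `ℝ` equals its integral over
`ℝ + i y` with `y = ∓w`, the sign opposite to that of `s`. On that line `|e^{-isz}| = e^{-w|s|}`.
-/

open MeasureTheory

/-- The Fourier transform normalized as `f̂(s) = (2π)⁻¹ ∫ e^{-isx} f(x) dx`,
applied to the restriction of `f : ℂ → ℂ` to the real line. -/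
noncomputable def fourierHat (f : ℂ → ℂ) : ℝ → ℂ :=
  fun s => (2 * Real.pi : ℂ)⁻¹ * ∫ x : ℝ, Complex.exp (-((s : ℂ) * (x : ℂ)) * Complex.I) * f x

open Complex Filter Topology Set Real FourierTransform
open scoped Interval

section

variable {E : Type*} [NormedAddCommGroup E]

theorem integrable_of_norm_le_div_one_add_sq {h : ℝ → E} {C : ℝ}
    (hm : AEStronglyMeasurable h) (hb : ∀ x, ‖h x‖ ≤ C / (1 + x ^ 2)) : Integrable h :=
  (integrable_inv_one_add_sq.const_mul C).mono' hm
    (Eventually.of_forall fun x => by simpa [div_eq_mul_inv] using hb x)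

variable [NormedSpace ℂ E] {G : ℂ → E} {y C : ℝ}

theorem norm_intervalIntegral_vertical_le
    (hC : ∀ z ∈ univ ×ℂ [[0, y]], ‖G z‖ ≤ C / (1 + z.re ^ 2)) (c : ℝ) :
    ‖∫ t in (0 : ℝ)..y, G (c + t * I)‖ ≤ C / (1 + c ^ 2) * |y| := by
  refine (intervalIntegral.norm_integral_le_of_norm_le_const fun t ht => ?_).trans_eq
    (by rw [sub_zero])
  simpa using hC (c + t * I) (by simpa [mem_reProdIm] using uIoc_subset_uIcc ht)

theorem tendsto_intervalIntegral_vertical_cocompact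
    (hC : ∀ z ∈ univ ×ℂ [[0, y]], ‖G z‖ ≤ C / (1 + z.re ^ 2)) :
    Tendsto (fun c : ℝ => ∫ t in (0 : ℝ)..y, G (c + t * I)) (cocompact ℝ) (𝓝 0) := by
  have h_sq : Tendsto (fun c : ℝ => 1 + c ^ 2) (cocompact ℝ) atTop := by
    refine tendsto_atTop_add_const_left _ 1 <|
      ((tendsto_pow_atTop two_ne_zero).comp tendsto_norm_cocompact_atTop).congr fun c => by simp
  have h_bound : Tendsto (fun c : ℝ => C / (1 + c ^ 2) * |y|) (cocompact ℝ) (𝓝 0) := by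
    simpa using (tendsto_const_nhds.div_atTop h_sq).mul_const |y|
  exact squeeze_zero_norm (norm_intervalIntegral_vertical_le hC) h_bound

theorem integral_add_mul_I_eq_integral [CompleteSpace E]
    (hG : DifferentiableOn ℂ G (univ ×ℂ [[0, y]]))
    (hC : ∀ z ∈ univ ×ℂ [[0, y]], ‖G z‖ ≤ C / (1 + z.re ^ 2)) :
    ∫ x : ℝ, G (x + y * I) = ∫ x : ℝ, G x := by
  have h_line : ∀ c ∈ [[0, y]], Integrable fun x : ℝ => G (x + c * I) := by
    intro c hc
    have hmem : ∀ x : ℝ, (x + c * I : ℂ) ∈ univ ×ℂ [[0, y]] := fun x => by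
      simpa [mem_reProdIm] using hc
    exact integrable_of_norm_le_div_one_add_sq
      (hG.continuousOn.comp_continuous (by fun_prop) hmem).aestronglyMeasurable
      fun x => by simpa using hC _ (hmem x)
  have h_rect : ∀ T : ℝ, (∫ x in -T..T, G x) - ∫ x in -T..T, G (x + y * I) =
      I • (∫ t in 0..y, G (-T + t * I)) - I • ∫ t in 0..y, G (T + t * I) := by
    intro T
    have h := integral_boundary_rect_eq_zero_of_differentiableOn G (-T) (T + y * I)
      (hG.mono (reProdIm_subset_iff'.mpr (.inl ⟨subset_univ _, by simp⟩)))
    simp only [neg_re, ofReal_re, neg_im, ofReal_im, neg_zero, add_zero, add_re, mul_re, I_re,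
      mul_zero, I_im, mul_one, sub_self, add_im, mul_im, zero_add, ofReal_zero, zero_mul,
      ofReal_neg] at h
    rw [← sub_eq_zero, ← h]
    abel
  have h_lim := ((intervalIntegral_tendsto_integral (by simpa using h_line 0 left_mem_uIcc)
    tendsto_neg_atTop_atBot tendsto_id).sub (intervalIntegral_tendsto_integral
      (h_line y right_mem_uIcc) tendsto_neg_atTop_atBot tendsto_id))
  have h_vert := tendsto_intervalIntegral_vertical_cocompact hC
  have h_zero : Tendsto (fun T : ℝ =>
      I • (∫ t in 0..y, G (-T + t * I)) - I • ∫ t in 0..y, G (T + t * I)) atTop (𝓝 0) := by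
    simpa using ((h_vert.comp (tendsto_neg_atTop_atBot.mono_right atBot_le_cocompact)).const_smul
      I).sub ((h_vert.comp (tendsto_id.mono_right atTop_le_cocompact)).const_smul I)
  have := tendsto_nhds_unique h_lim (h_zero.congr fun T => (h_rect T).symm)
  exact (sub_eq_zero.mp this).symm

end

theorem fourierHat_eq_fourier (f : ℂ → ℂ) (s : ℝ) :
    fourierHat f s = (2 * π : ℂ)⁻¹ * 𝓕 (fun x : ℝ => f x) ((2 * π)⁻¹ * s) := by
  rw [fourierHat, fourier_real_eq_integral_exp_smul]
  congr 2 with x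
  rw [smul_eq_mul]
  congr 2
  push_cast
  field_simp

theorem iteratedDeriv_fourierHat {f : ℂ → ℂ} {k : ℕ}
    (hf : ∀ n ≤ k, Integrable fun x : ℝ => x ^ n • f x) :
    iteratedDeriv k (fourierHat f) = fourierHat fun z => (-I * z) ^ k * f z := by
  have hf' : ∀ n : ℕ, (n : ℕ∞) ≤ k → Integrable fun x : ℝ => x ^ n • f x :=
    fun n hn => hf n (by exact_mod_cast hn)
  have h_smooth : ContDiff ℝ k (𝓕 fun x : ℝ => f x) :=
    contDiff_fourier fun n hn => by simpa [norm_smul] using (hf' n hn).norm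
  ext s
  rw [funext (fourierHat_eq_fourier f), iteratedDeriv_const_mul_field,
    iteratedDeriv_comp_const_smul h_smooth, iteratedDeriv_fourier hf' le_rfl,
    fourierHat_eq_fourier]
  simp only [fourier_real_eq_integral_exp_smul, ← integral_smul]
  congr 2 with x
  have hπ : (π : ℂ) ≠ 0 := ofReal_ne_zero.mpr pi_ne_zero
  simp only [smul_eq_mul, real_smul]
  push_cast
  rw [mul_left_comm, ← mul_assoc ((2 * (π : ℂ))⁻¹ ^ k), ← mul_pow]
  congr 3
  field_simp

theorem norm_fourierHat_le_of_strip {g : ℂ → ℂ} {w C : ℝ} (hw : 0 ≤ w)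
    (hg : DifferentiableOn ℂ g {z : ℂ | |z.im| ≤ w})
    (hC : ∀ z ∈ {z : ℂ | |z.im| ≤ w}, ‖g z‖ ≤ C / (1 + z.re ^ 2)) (s : ℝ) :
    ‖fourierHat g s‖ ≤ C / 2 * Real.exp (-w * |s|) := by
  obtain ⟨y, hy, hsy⟩ : ∃ y : ℝ, |y| ≤ w ∧ s * y = -w * |s| := by
    rcases le_total 0 s with hs | hs
    · exact ⟨-w, by simp [abs_of_nonneg hw], by rw [abs_of_nonneg hs]; ring⟩
    · exact ⟨w, by simp [abs_of_nonneg hw], by rw [abs_of_nonpos hs]; ring⟩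
  set G : ℂ → ℂ := fun z => cexp (-(s * z) * I) * g z
  have hG_norm (z : ℂ) : ‖G z‖ = Real.exp (s * z.im) * ‖g z‖ := by
    simp [G, norm_exp]
  have h_strip : univ ×ℂ [[0, y]] ⊆ {z : ℂ | |z.im| ≤ w} := fun z hz =>
    le_trans (by simpa using abs_sub_left_of_mem_uIcc ((mem_reProdIm.mp hz).2)) hy
  have hG_bound : ∀ z ∈ univ ×ℂ [[0, y]],
      ‖G z‖ ≤ Real.exp (w * |s|) * C / (1 + z.re ^ 2) := by
    intro z hz
    have h_exp : s * z.im ≤ w * |s| := calc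
      s * z.im ≤ |s| * |z.im| := by rw [← abs_mul]; exact le_abs_self _
      _ ≤ w * |s| := by
        rw [mul_comm w]
        exact mul_le_mul_of_nonneg_left (h_strip hz) (abs_nonneg s)
    rw [hG_norm, mul_div_assoc]
    exact mul_le_mul (Real.exp_le_exp.mpr h_exp) (hC z (h_strip hz)) (norm_nonneg _)
      (Real.exp_pos _).le
  have h_shift : ∫ x : ℝ, G (x + y * I) = ∫ x : ℝ, G x := integral_add_mul_I_eq_integral
    ((((differentiable_id.const_mul _).neg.mul_const I).cexp.differentiableOn.mul hg).mono h_strip)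
    hG_bound
  have h_line (x : ℝ) : ‖G (x + y * I)‖ ≤ Real.exp (-w * |s|) * C * (1 + x ^ 2)⁻¹ := by
    have := hC (x + y * I) (h_strip (by simp [mem_reProdIm]))
    rw [hG_norm]
    simp only [add_im, ofReal_im, mul_im, ofReal_re, I_im, mul_one, I_re, mul_zero, add_zero,
      zero_add, add_re, mul_re, sub_self] at this ⊢
    rw [hsy, mul_assoc, ← div_eq_mul_inv]
    exact mul_le_mul_of_nonneg_left this (Real.exp_pos _).le
  calc ‖fourierHat g s‖ = (2 * π)⁻¹ * ‖∫ x : ℝ, G (x + y * I)‖ := by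
        change ‖(2 * π : ℂ)⁻¹ * ∫ x : ℝ, G x‖ = _
        rw [← h_shift, norm_mul, norm_inv]
        norm_cast
        rw [Real.norm_of_nonneg (by positivity)]
    _ ≤ (2 * π)⁻¹ * ∫ x : ℝ, Real.exp (-w * |s|) * C * (1 + x ^ 2)⁻¹ := by
        gcongr
        exact norm_integral_le_of_norm_le (integrable_inv_one_add_sq.const_mul _)
          (Eventually.of_forall h_line)
    _ = C / 2 * Real.exp (-w * |s|) := by
        rw [integral_const_mul, integral_univ_inv_one_add_sq]
        field_simp

theorem norm_le_div_one_add_re_sq {a z : ℂ} {M₁ M₂ : ℝ} (h₁ : ‖a‖ ≤ M₁)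
    (h₂ : ‖a * z ^ 2‖ ≤ M₂) : ‖a‖ ≤ (M₁ + M₂) / (1 + z.re ^ 2) := by
  have h_re : ‖a‖ * z.re ^ 2 ≤ M₂ := calc
    ‖a‖ * z.re ^ 2 ≤ ‖a‖ * ‖z‖ ^ 2 := by
      rw [Complex.sq_norm, sq]
      exact mul_le_mul_of_nonneg_left (re_sq_le_normSq z) (norm_nonneg a)
    _ = ‖a * z ^ 2‖ := by rw [norm_mul, norm_pow]
    _ ≤ M₂ := h₂
  rw [le_div_iff₀ (by positivity)]
  linarith

theorem exists_norm_mul_pow_le_div_one_add_re_sq {f : ℂ → ℂ} {S : Set ℂ}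
    (hbd : ∀ k : ℕ, ∃ M : ℝ, 0 < M ∧ ∀ z ∈ S, ‖f z * z ^ k‖ ≤ M) (n : ℕ) :
    ∃ D : ℝ, 0 < D ∧ ∀ z ∈ S, ‖f z * z ^ n‖ ≤ D / (1 + z.re ^ 2) := by
  obtain ⟨M₁, hM₁, h₁⟩ := hbd n
  obtain ⟨M₂, hM₂, h₂⟩ := hbd (n + 2)
  exact ⟨M₁ + M₂, by positivity, fun z hz =>
    norm_le_div_one_add_re_sq (h₁ z hz) (by simpa [mul_assoc, ← pow_add] using h₂ z hz)⟩

/-- If `f` is holomorphic on the strip `{z : |Im z| ≤ 2w}` (`w > 0`) and for every `k`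
there is `M_k > 0` with `|f(z) zᵏ| ≤ M_k` on the strip, then for every `k` there is
`p_k > 0` with `|f̂⁽ᵏ⁾(s)| ≤ p_k exp(−w|s|)` for all real `s`. -/
theorem stmt0 (f : ℂ → ℂ) (w : ℝ) (hw : 0 < w)
    (hf : DifferentiableOn ℂ f {z : ℂ | |z.im| ≤ 2 * w})
    (hbd : ∀ k : ℕ, ∃ M : ℝ, 0 < M ∧ ∀ z ∈ {z : ℂ | |z.im| ≤ 2 * w}, ‖f z * z ^ k‖ ≤ M) :
    ∀ k : ℕ, ∃ p : ℝ, 0 < p ∧ ∀ s : ℝ,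
      ‖iteratedDeriv k (fourierHat f) s‖ ≤ p * Real.exp (-w * |s|) := by
  have h_real (x : ℝ) : (x : ℂ) ∈ {z : ℂ | |z.im| ≤ 2 * w} := by simp [hw.le]
  have h_decay := exists_norm_mul_pow_le_div_one_add_re_sq hbd
  have h_moments (n : ℕ) : Integrable fun x : ℝ => x ^ n • f x := by
    obtain ⟨D, -, hD⟩ := h_decay n
    refine integrable_of_norm_le_div_one_add_sq (C := D) (((continuous_pow n).smul
      (hf.continuousOn.comp_continuous continuous_ofReal h_real)).aestronglyMeasurable) fun x => ?_
    simpa [norm_smul, mul_comm] using hD x (h_real x)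
  intro k
  obtain ⟨D, hD, hDk⟩ := h_decay k
  refine ⟨D / 2, by positivity, fun s => ?_⟩
  rw [iteratedDeriv_fourierHat fun n _ => h_moments n]
  have h_strip : {z : ℂ | |z.im| ≤ w} ⊆ {z : ℂ | |z.im| ≤ 2 * w} :=
    fun z (hz : |z.im| ≤ w) => show |z.im| ≤ 2 * w by linarith
  refine norm_fourierHat_le_of_strip hw.le
    ((((differentiable_id.const_mul _).pow k).differentiableOn.mul hf).mono h_strip)
    (fun z hz => ?_) s
  simpa [mul_comm, mul_pow] using hDk z (h_strip hz)
end

section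
/- The function g(z) = e^{-z²/2} · ((1 − e^{-z²})/z²)^{1/2} · z (extended holomorphically through z = 0 with value determined by the principal branch of the square root, noting (1−e^{-z²})/z² → 1 as z → 0) is holomorphic on some horizontal strip {z ∈ ℂ : |Im z| ≤ 2w} with w > 0, and for every k ∈ ℕ there is M_k > 0 such that |g(z) z^k| ≤ M_k on that strip. -/
/-!
Write `u(z) = φ(z²)` with `φ(w) = (1 - e^{-w})/w`, an entire function with `φ(0) = 1`. On the strip
`|Im z| ≤ 1/10` the principal square root of `u` is holomorphic because `Re u > 0` there: for
`|z²| < 1` since `|φ(w) - 1| ≤ |w|`, and for `|z²| ≥ 1` since then `Re z²` is close to `|z²|`,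
so the term `e^{-z²}` is too small to turn `Re((1 - e^{-z²}) conj z²)` negative. For the bound,
`|√u(z)| |z| = |1 - e^{-z²}|^{1/2}` is bounded on the strip and `|e^{-z²/2}| ≤ e^{Im² z} e^{-|z|²/2}`,
which beats every power `|z|^k` because `r^k ≤ k! e^r` and `r - r²/2 ≤ 1/2`.
-/

open Complex ComplexConjugate

/-- `(1 - e^{-w}) / w`, with its removable singularity at `0` filled in by `dslope`. -/
noncomputable def oneSubExpNegDiv : ℂ → ℂ := dslope (fun w => 1 - exp (-w)) 0

lemma differentiable_oneSubExpNegDiv : Differentiable ℂ oneSubExpNegDiv := by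
  rw [← differentiableOn_univ]
  exact (differentiableOn_dslope Filter.univ_mem).2 (by fun_prop)

lemma oneSubExpNegDiv_mul (w : ℂ) : oneSubExpNegDiv w * w = 1 - exp (-w) := by
  simpa [oneSubExpNegDiv, mul_comm] using sub_smul_dslope (fun w => 1 - exp (-w)) 0 w

lemma oneSubExpNegDiv_zero : oneSubExpNegDiv 0 = 1 := by
  have h : HasDerivAt (fun w => 1 - exp (-w)) 1 0 := by
    simpa using ((hasDerivAt_id (0 : ℂ)).neg.cexp).const_sub 1
  rw [oneSubExpNegDiv, dslope_same, h.deriv]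

lemma oneSubExpNegDiv_of_ne_zero {w : ℂ} (hw : w ≠ 0) :
    oneSubExpNegDiv w = (1 - exp (-w)) / w := by
  rw [eq_div_iff hw, oneSubExpNegDiv_mul]

lemma norm_oneSubExpNegDiv_sub_one_le {w : ℂ} (hw : ‖w‖ ≤ 1) :
    ‖oneSubExpNegDiv w - 1‖ ≤ ‖w‖ := by
  rcases eq_or_ne w 0 with rfl | hw0
  · simp [oneSubExpNegDiv_zero]
  have hmul : (oneSubExpNegDiv w - 1) * w = -(exp (-w) - 1 - -w) := by
    rw [sub_mul, oneSubExpNegDiv_mul]; ring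
  have h := norm_exp_sub_one_sub_id_le (x := -w) (by rwa [norm_neg])
  rw [← norm_neg, ← hmul, norm_mul, norm_neg, sq] at h
  exact le_of_mul_le_mul_right h (norm_pos_iff.2 hw0)

lemma re_oneSubExpNegDiv_pos {w : ℂ} (hw : ‖w‖ * Real.exp (-w.re) < w.re) :
    0 < (oneSubExpNegDiv w).re := by
  have hw0 : w ≠ 0 := by rintro rfl; simp at hw
  have hconj : oneSubExpNegDiv w * (normSq w : ℂ) = (1 - exp (-w)) * conj w := by
    rw [← mul_conj, ← mul_assoc, oneSubExpNegDiv_mul]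
  have hre : w.re - ‖w‖ * Real.exp (-w.re) ≤ (oneSubExpNegDiv w).re * normSq w := by
    have h := re_le_norm (exp (-w) * conj w)
    rw [norm_mul, norm_exp, norm_conj, neg_re] at h
    rw [← re_mul_ofReal, hconj, sub_mul, one_mul, sub_re, conj_re]
    linarith
  exact pos_of_mul_pos_left (by linarith) (normSq_nonneg w)

lemma re_oneSubExpNegDiv_sq_pos {z : ℂ} (hz : |z.im| ≤ 1 / 10) :
    0 < (oneSubExpNegDiv (z ^ 2)).re := by
  rcases lt_or_ge ‖z ^ 2‖ 1 with hlt | hge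
  · have h := (abs_re_le_norm _).trans (norm_oneSubExpNegDiv_sub_one_le hlt.le)
    rw [sub_re, one_re] at h
    linarith [neg_abs_le ((oneSubExpNegDiv (z ^ 2)).re - 1)]
  · apply re_oneSubExpNegDiv_pos
    set a := (z ^ 2).re
    have hnorm : ‖z ^ 2‖ = a + 2 * z.im ^ 2 := by
      rw [norm_pow, ← normSq_eq_norm_sq, normSq_apply]
      simp only [a, pow_two, mul_re]; ring
    have hy : z.im ^ 2 ≤ 1 / 100 := by nlinarith [sq_abs z.im, abs_nonneg z.im]
    have hexp : Real.exp (-a) * (1 + a) ≤ 1 := by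
      calc Real.exp (-a) * (1 + a) ≤ Real.exp (-a) * Real.exp a := by
            gcongr; linarith [Real.add_one_le_exp a]
        _ = 1 := by rw [← Real.exp_add, neg_add_cancel, Real.exp_zero]
    -- `e^{-a} (a + 2 Im² z) < a` because `e^{-a} (1 + a) ≤ 1` and `2 Im² z < a²`
    rw [hnorm]
    nlinarith [Real.exp_pos (-a)]

noncomputable def gaussianProfile (z : ℂ) : ℂ :=
  exp (-z ^ 2 / 2) * oneSubExpNegDiv (z ^ 2) ^ ((1 : ℂ) / 2) * z

lemma differentiableAt_gaussianProfile {z : ℂ} (hz : |z.im| ≤ 1 / 10) :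
    DifferentiableAt ℂ gaussianProfile z := by
  have hsqrt : DifferentiableAt ℂ (fun z => oneSubExpNegDiv (z ^ 2) ^ ((1 : ℂ) / 2)) z :=
    ((differentiable_oneSubExpNegDiv _).comp z (differentiableAt_pow 2)).cpow_const
      (Or.inl (re_oneSubExpNegDiv_sq_pos hz))
  exact ((by fun_prop : DifferentiableAt ℂ (fun z => exp (-z ^ 2 / 2)) z).mul hsqrt).mul
    differentiableAt_id

lemma norm_exp_neg_sq_half (z : ℂ) :
    ‖exp (-z ^ 2 / 2)‖ = Real.exp (z.im ^ 2) * Real.exp (-‖z‖ ^ 2 / 2) := by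
  rw [norm_exp, ← Real.exp_add, ← normSq_eq_norm_sq, normSq_apply]
  congr 1
  simp [pow_two]
  ring

lemma norm_cpow_half_mul_norm_le {z : ℂ} (hz : |z.im| ≤ 1) :
    ‖oneSubExpNegDiv (z ^ 2) ^ ((1 : ℂ) / 2)‖ * ‖z‖ ≤ 2 := by
  have hsq : (oneSubExpNegDiv (z ^ 2) ^ ((1 : ℂ) / 2)) ^ 2 = oneSubExpNegDiv (z ^ 2) := by
    rw [one_div, cpow_ofNat_inv_pow]
  have hre : -(z ^ 2).re ≤ 1 := by
    have : (z ^ 2).re = z.re ^ 2 - z.im ^ 2 := by simp [pow_two]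
    nlinarith [sq_abs z.im, abs_nonneg z.im]
  have h4 : (‖oneSubExpNegDiv (z ^ 2) ^ ((1 : ℂ) / 2)‖ * ‖z‖) ^ 2 ≤ 2 ^ 2 :=
    calc (‖oneSubExpNegDiv (z ^ 2) ^ ((1 : ℂ) / 2)‖ * ‖z‖) ^ 2
        = ‖1 - exp (-z ^ 2)‖ := by
          rw [mul_pow, ← norm_pow, ← norm_pow, ← norm_mul, hsq, oneSubExpNegDiv_mul]
      _ ≤ 1 + Real.exp 1 := by
          refine (norm_sub_le _ _).trans ?_
          rw [norm_one, norm_exp, neg_re]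
          gcongr
      _ ≤ 2 ^ 2 := by linarith [Real.exp_one_lt_d9]
  exact (pow_le_pow_iff_left₀ (by positivity) zero_le_two two_ne_zero).1 h4

lemma pow_mul_exp_neg_sq_half_le {r : ℝ} (hr : 0 ≤ r) (k : ℕ) :
    r ^ k * Real.exp (-r ^ 2 / 2) ≤ k.factorial * Real.exp (1 / 2) := by
  have hpow : r ^ k ≤ k.factorial * Real.exp r := by
    have := Real.pow_div_factorial_le_exp r hr k
    rwa [div_le_iff₀ (by positivity), mul_comm] at this
  calc r ^ k * Real.exp (-r ^ 2 / 2) ≤ k.factorial * Real.exp r * Real.exp (-r ^ 2 / 2) := by gcongr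
    _ = k.factorial * Real.exp (r - r ^ 2 / 2) := by rw [mul_assoc, ← Real.exp_add]; ring_nf
    _ ≤ k.factorial * Real.exp (1 / 2) := by gcongr; nlinarith [sq_nonneg (r - 1)]

lemma norm_gaussianProfile_mul_pow_le {z : ℂ} (hz : |z.im| ≤ 1) (k : ℕ) :
    ‖gaussianProfile z * z ^ k‖ ≤ Real.exp 1 * 2 * (k.factorial * Real.exp (1 / 2)) := by
  have hy : Real.exp (z.im ^ 2) ≤ Real.exp 1 := by
    gcongr; nlinarith [sq_abs z.im, abs_nonneg z.im]
  calc ‖gaussianProfile z * z ^ k‖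
      = Real.exp (z.im ^ 2) * (‖oneSubExpNegDiv (z ^ 2) ^ ((1 : ℂ) / 2)‖ * ‖z‖) *
          (‖z‖ ^ k * Real.exp (-‖z‖ ^ 2 / 2)) := by
        rw [gaussianProfile, norm_mul, norm_mul, norm_mul, norm_pow, norm_exp_neg_sq_half]
        ring
    _ ≤ Real.exp 1 * 2 * (k.factorial * Real.exp (1 / 2)) := by
        gcongr ?_ * ?_ * ?_
        · exact norm_cpow_half_mul_norm_le hz
        · exact pow_mul_exp_neg_sq_half_le (norm_nonneg z) k

/-- The function `g(z) = e^{-z²/2}·((1−e^{-z²})/z²)^{1/2}·z` (square root taken with the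
principal branch, extended holomorphically through `z = 0`) is holomorphic on some strip
`{z : |Im z| ≤ 2w}` with `w > 0`, and for every `k` there is `M_k > 0` with
`|g(z) zᵏ| ≤ M_k` on that strip. -/
theorem stmt1 :
    ∃ w : ℝ, 0 < w ∧ ∃ g : ℂ → ℂ,
      DifferentiableOn ℂ g {z : ℂ | |z.im| ≤ 2 * w} ∧
      (∀ z ∈ {z : ℂ | |z.im| ≤ 2 * w}, z ≠ 0 →
        g z = Complex.exp (-z ^ 2 / 2) *
          ((1 - Complex.exp (-z ^ 2)) / z ^ 2) ^ ((1 : ℂ) / 2) * z) ∧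
      (∀ k : ℕ, ∃ M : ℝ, 0 < M ∧ ∀ z ∈ {z : ℂ | |z.im| ≤ 2 * w}, ‖g z * z ^ k‖ ≤ M) := by
  refine ⟨1 / 20, by norm_num, gaussianProfile, ?_, ?_, ?_⟩
  · intro z hz
    exact (differentiableAt_gaussianProfile (by norm_num at hz ⊢; linarith)).differentiableWithinAt
  · intro z _ hz
    rw [gaussianProfile, oneSubExpNegDiv_of_ne_zero (pow_ne_zero 2 hz)]
  · intro k
    exact ⟨_, by positivity, fun z hz =>
      norm_gaussianProfile_mul_pow_le (by norm_num at hz ⊢; linarith) k⟩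
end

section
/- Let a, b be real numbers with ab ≠ 0, let z = a + b·i, and let u(z) = (1 − e^{-z²})/z². If u(z) ∈ (−∞, 0], i.e. u(z) is a nonpositive real number, then a² − b² ≤ 0. -/
/-- Let `z = a + b·i` with `a·b ≠ 0`. If `u(z) = (1 − e^{-z²})/z²` is a nonpositive real
number, then `a² − b² ≤ 0`. -/
theorem stmt2 (a b : ℝ) (hab : a * b ≠ 0)
    (h : ∃ r : ℝ, r ≤ 0 ∧
      (1 - Complex.exp (-((a : ℂ) + (b : ℂ) * Complex.I) ^ 2)) /
        ((a : ℂ) + (b : ℂ) * Complex.I) ^ 2 = (r : ℂ)) :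
    a ^ 2 - b ^ 2 ≤ 0 := by
  by_contra hc
  push_neg at hc
  obtain ⟨r, hr, heq⟩ := h
  set z : ℂ := (a : ℂ) + (b : ℂ) * Complex.I with hz
  have hz2re : (z ^ 2).re = a ^ 2 - b ^ 2 := by
    simp [hz, Complex.add_re, Complex.mul_re, pow_two, Complex.add_im]
  have hz2ne : z ^ 2 ≠ 0 := by
    intro h0
    rw [h0] at hz2re
    simp at hz2re
    linarith
  rw [div_eq_iff hz2ne] at heq
  -- take real parts
  have hre := congrArg Complex.re heq
  simp only [Complex.sub_re, Complex.one_re, Complex.mul_re, Complex.ofReal_re,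
    Complex.ofReal_im, zero_mul, sub_zero] at hre
  rw [hz2re] at hre
  -- bound the real part of exp(-z^2)
  have hexpre : (Complex.exp (-z ^ 2)).re = Real.exp (-(a ^ 2 - b ^ 2)) *
      Real.cos ((-z ^ 2).im) := by
    rw [Complex.exp_re]
    congr 1
    rw [Complex.neg_re, hz2re]
  have hb : (Complex.exp (-z ^ 2)).re ≤ Real.exp (-(a ^ 2 - b ^ 2)) := by
    rw [hexpre]
    calc Real.exp (-(a ^ 2 - b ^ 2)) * Real.cos ((-z ^ 2).im)
        ≤ Real.exp (-(a ^ 2 - b ^ 2)) * 1 :=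
          mul_le_mul_of_nonneg_left (Real.cos_le_one _) (Real.exp_pos _).le
      _ = _ := mul_one _
  have hlt : Real.exp (-(a ^ 2 - b ^ 2)) < 1 := by
    rw [Real.exp_lt_one_iff]
    linarith
  have hrs : r * (a ^ 2 - b ^ 2) ≤ 0 :=
    mul_nonpos_of_nonpos_of_nonneg hr (by linarith)
  linarith
end

section
/- In the ℤ/2-graded tensor product A ⊗ C_n of a supercommutative superalgebra A with the Clifford algebra C_n: if K_1,…,K_n are odd elements of A and K = (K_1,…,K_n), then for every s ∈ ℝ and every i, exp(s Kᵗγ) · γ_i · exp(−s Kᵗγ) = γ_i + 2s K_i, where Kᵗγ = Σ_j K_j ⊗ γ_j. -/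
/-!
Write `T = ∑ⱼ Kⱼ γⱼ`. Because `Kⱼ` anticommutes with `γᵢ`, `⁅Kⱼ γⱼ, γᵢ⁆ = Kⱼ (γⱼ γᵢ + γᵢ γⱼ)`, so
the Clifford relations give `⁅T, γᵢ⁆ = 2 Kᵢ`; and `Kⱼ γⱼ`, a product of two elements anticommuting
with `Kᵢ`, commutes with `Kᵢ`, hence so does `T`. Whenever `⁅T, x⁆ = c` commutes with `T`, the
function `u ↦ exp (u T) x exp (-u T) - u c` has derivative `exp (u T) (⁅T, x⁆ - c) exp (-u T) = 0`,
so it is constantly `x`.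
-/

open NormedSpace

section ExpConjugation

variable {𝕂 A : Type*} [RCLike 𝕂] [NormedRing A] [NormedAlgebra 𝕂 A] [CompleteSpace A]

theorem exp_smul_mul_mul_exp_neg_smul_of_lie_eq {T x c : A} (hTx : ⁅T, x⁆ = c)
    (hTc : Commute T c) (z : 𝕂) :
    exp (z • T) * x * exp (-(z • T)) = x + z • c := by
  set F : 𝕂 → A := fun u => exp (u • T) * x * exp (u • -T) - u • c
  have hF : ∀ u, HasDerivAt F 0 u := by
    intro u
    have hexp : exp (u • T) * exp (u • -T) = 1 := by
      have hball : ∀ y : A, y ∈ Metric.eball 0 (expSeries 𝕂 A).radius := fun y =>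
        (expSeries_radius_eq_top 𝕂 A).symm ▸ edist_lt_top _ _
      rw [smul_neg, ← exp_add_of_commute_of_mem_ball (Commute.refl _).neg_right (hball _) (hball _),
        add_neg_cancel, exp_zero]
    have hcexp : Commute c (exp (u • T)) := (hTc.symm.smul_right u).exp_right
    have hderiv := (((hasDerivAt_exp_smul_const T u).mul_const x).mul
      (hasDerivAt_exp_smul_const' (-T) u)).sub ((hasDerivAt_id u).smul_const c)
    have hzero : exp (u • T) * T * x * exp (u • -T) + exp (u • T) * x * (-T * exp (u • -T))
        - (1 : 𝕂) • c = 0 := by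
      calc _ = c * (exp (u • T) * exp (u • -T)) - c := by
            rw [← mul_assoc c, hcexp.eq, ← hTx, Ring.lie_def, one_smul]; noncomm_ring
        _ = 0 := by rw [hexp, mul_one, sub_self]
    exact hzero ▸ hderiv
  have hconst := is_const_of_deriv_eq_zero (fun u => (hF u).differentiableAt)
    (fun u => (hF u).deriv) z 0
  simp only [F, smul_neg, zero_smul, neg_zero, exp_zero, mul_one, one_mul, sub_zero] at hconst
  exact eq_add_of_sub_eq hconst

end ExpConjugation

section Anticommuting

variable {R : Type*} [Ring R] {a b c : R}

theorem commute_mul_of_anticommute (ha : a * c = -(c * a)) (hb : b * c = -(c * b)) :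
    Commute (a * b) c := by
  rw [Commute, SemiconjBy, mul_assoc, hb, mul_neg, ← mul_assoc, ha, neg_mul, neg_neg, mul_assoc]

theorem lie_mul_eq_mul_add_of_anticommute (ha : a * c = -(c * a)) :
    ⁅a * b, c⁆ = a * (b * c + c * b) := by
  rw [Ring.lie_def, mul_add, ← mul_assoc c, ← neg_neg (c * a), ← ha]
  noncomm_ring

end Anticommuting

section Clifford

variable {ι R : Type*} [Fintype ι] [Ring R] {K g : ι → R}

theorem lie_sum_mul_eq_mul_two [DecidableEq ι] (hKg : ∀ i j, K i * g j = -(g j * K i))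
    (hgg : ∀ j k, g j * g k + g k * g j = if j = k then (2 : R) else 0) (i : ι) :
    ⁅∑ j, K j * g j, g i⁆ = K i * 2 := by
  rw [Ring.lie_def, Finset.sum_mul, Finset.mul_sum, ← Finset.sum_sub_distrib]
  simp only [← Ring.lie_def, lie_mul_eq_mul_add_of_anticommute (hKg _ i), hgg, mul_ite, mul_zero,
    Finset.sum_ite_eq', Finset.mem_univ, if_true]

theorem commute_sum_mul (hKK : ∀ i j, K i * K j = -(K j * K i))
    (hKg : ∀ i j, K i * g j = -(g j * K i)) (i : ι) :
    Commute (∑ j, K j * g j) (K i) :=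
  Commute.sum_left _ _ _ fun j _ =>
    commute_mul_of_anticommute (hKK j i) (by rw [hKg, neg_neg])

end Clifford

/-- In (a model of) the ℤ/2-graded tensor product `A ⊗ C_n` of a supercommutative superalgebra
`A` with the Clifford algebra `C_n`: if `K₁,…,Kₙ` are odd elements of `A` (so the `K i`
anticommute among themselves and with the odd generators `g i = 1 ⊗ γᵢ`), then for every
`s ∈ ℝ` and every `i`, `exp(s Kᵗγ) · γᵢ · exp(−s Kᵗγ) = γᵢ + 2s Kᵢ`, where
`Kᵗγ = Σⱼ Kⱼ ⊗ γⱼ`. -/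
theorem stmt5 (n : ℕ) (R : Type*) [NormedRing R] [NormedAlgebra ℂ R] [CompleteSpace R]
    (K g : Fin n → R)
    (hKK : ∀ i j : Fin n, K i * K j = -(K j * K i))
    (hKg : ∀ i j : Fin n, K i * g j = -(g j * K i))
    (hgg : ∀ j k : Fin n, g j * g k + g k * g j = if j = k then (2 : R) else 0)
    (s : ℝ) (i : Fin n) :
    NormedSpace.exp ((s : ℂ) • ∑ j, K j * g j) * g i *
        NormedSpace.exp (-((s : ℂ) • ∑ j, K j * g j))
      = g i + ((2 * s : ℝ) : ℂ) • K i := by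
  rw [exp_smul_mul_mul_exp_neg_smul_of_lie_eq (lie_sum_mul_eq_mul_two hKg hgg i)
    ((commute_sum_mul hKK hKg i).mul_right (Commute.ofNat_right _ 2))]
  push_cast
  rw [mul_comm, mul_smul, mul_two, two_smul]
end

section
/- Same setting as above (exponential volume growth, C₂ ≥ 0, w > 0), and additionally let c ∈ C(M) be a function with 0 ≤ c ≤ 1 that equals 1 on the ball B₁(x) (i.e., 1 − c vanishes on B₁(x)). Then there exists M₃ > 0 such that for all sufficiently small t > 0 and this x: ∫_M exp(C₂ d(x,y)) exp(−(w/t) d(x,y)) (1 − c(y)) dμ(y) ≤ M₃ e^{−w/t}. -/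
/-!
Cut `M` into the annuli `n ≤ d(x, y) < n + 1`. On the `n`-th annulus the integrand is at most
`exp (C₂ (n + 1) - (w / t) n)`, and it vanishes for `n = 0` because `1 - c = 0` on `B₁(x)`; the
annulus lies in `B̄_{n+1}(x)`, of measure at most `M₁ exp (C₄ (n + 1))`. Once
`w / t > 2 (C₂ + C₄)` these bounds decay geometrically in `n`, and since the sum starts at
`n = 1` it is `O(e^{-w/t})`.
-/

open MeasureTheory Metric Real
open scoped ENNReal

section Annuli

variable {M : Type*} [PseudoMetricSpace M]

theorem iUnion_preimage_dist_Ico_eq_univ (x : M) :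
    ⋃ n : ℕ, dist x ⁻¹' Set.Ico (n : ℝ) (n + 1) = Set.univ :=
  Set.eq_univ_of_forall fun y =>
    Set.mem_iUnion.2 ⟨⌊dist x y⌋₊, Nat.floor_le dist_nonneg, Nat.lt_floor_add_one _⟩

theorem lintegral_le_tsum_mul_measure_closedBall [MeasurableSpace M] (μ : Measure M) (x : M)
    {f : M → ℝ≥0∞} {a : ℕ → ℝ≥0∞}
    (hf : ∀ (n : ℕ) (y : M), dist x y ∈ Set.Ico (n : ℝ) (n + 1) → f y ≤ a n) :
    ∫⁻ y, f y ∂μ ≤ ∑' n : ℕ, a n * μ (closedBall x (n + 1)) :=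
  calc ∫⁻ y, f y ∂μ
      = ∫⁻ y in ⋃ n : ℕ, dist x ⁻¹' Set.Ico (n : ℝ) (n + 1), f y ∂μ := by
        rw [iUnion_preimage_dist_Ico_eq_univ, Measure.restrict_univ]
    _ ≤ ∑' n : ℕ, ∫⁻ y in dist x ⁻¹' Set.Ico (n : ℝ) (n + 1), f y ∂μ :=
        lintegral_iUnion_le _ _
    _ ≤ ∑' n : ℕ, a n * μ (dist x ⁻¹' Set.Ico (n : ℝ) (n + 1)) :=
        ENNReal.tsum_le_tsum fun n =>
          (setLIntegral_mono measurable_const (hf n)).trans_eq (setLIntegral_const _ _)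
    _ ≤ ∑' n : ℕ, a n * μ (closedBall x (n + 1)) := by
        gcongr with n
        exact fun y hy => mem_closedBall'.2 hy.2.le

end Annuli

theorem ofReal_exp_mul_exp_mul_one_sub_le {M : Type*} [PseudoMetricSpace M] {C₂ s : ℝ}
    (hC₂ : 0 ≤ C₂) (hs : 0 ≤ s) {x : M} {c : M → ℝ} (hc0 : ∀ y, 0 ≤ c y)
    (hc1 : ∀ y ∈ ball x 1, c y = 1) (n : ℕ) (y : M)
    (hy : dist x y ∈ Set.Ico (n : ℝ) (n + 1)) :
    ENNReal.ofReal (exp (C₂ * dist x y) * exp (-s * dist x y) * (1 - c y))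
      ≤ if n = 0 then 0 else ENNReal.ofReal (exp (C₂ * (n + 1) - s * n)) := by
  split_ifs with hn
  · subst hn
    have hy1 : y ∈ ball x 1 := mem_ball'.2 (by simpa using hy.2)
    simp [hc1 y hy1]
  · refine ENNReal.ofReal_le_ofReal ?_
    calc exp (C₂ * dist x y) * exp (-s * dist x y) * (1 - c y)
        ≤ exp (C₂ * dist x y) * exp (-s * dist x y) * 1 := by
          gcongr
          linarith [hc0 y]
      _ ≤ exp (C₂ * (n + 1)) * exp (-s * n) := by
          rw [mul_one]
          gcongr exp (C₂ * ?_) * ?_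
          · exact hy.2.le
          · exact exp_le_exp.2 (by nlinarith [hy.1])
      _ = exp (C₂ * (n + 1) - s * n) := by rw [← exp_add]; ring_nf

theorem exp_mul_add_one_sub_mul_le {D s : ℝ} (hs : 2 * D ≤ s) {n : ℕ} (hn : n ≠ 0) :
    exp (D * (n + 1) - s * n) ≤ exp (3 * D - s) * exp (-D) ^ n := by
  obtain ⟨m, rfl⟩ := Nat.exists_eq_succ_of_ne_zero hn
  rw [← exp_nat_mul, ← exp_add, exp_le_exp]
  push_cast
  nlinarith [(Nat.cast_nonneg m : (0 : ℝ) ≤ m)]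

theorem tsum_ofReal_mul_geometric {K r : ℝ} (hK : 0 ≤ K) (hr0 : 0 ≤ r) (hr1 : r < 1) :
    ∑' n : ℕ, ENNReal.ofReal (K * r ^ n) = ENNReal.ofReal (K / (1 - r)) := by
  rw [← ENNReal.ofReal_tsum_of_nonneg (fun n => by positivity)
    ((summable_geometric_of_lt_one hr0 hr1).mul_left K), tsum_mul_left,
    tsum_geometric_of_lt_one hr0 hr1, div_eq_mul_inv]

theorem ite_mul_measure_closedBall_le {M : Type*} [MeasurableSpace M] [PseudoMetricSpace M]
    {μ : Measure M} {x : M} {M₁ C₂ C₄ s : ℝ} (hM₁ : 0 ≤ M₁)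
    (hvol : ∀ r : ℝ, 0 ≤ r → μ (closedBall x r) ≤ ENNReal.ofReal (M₁ * exp (C₄ * r)))
    (hs : 2 * (C₂ + C₄) ≤ s) (n : ℕ) :
    (if n = 0 then 0 else ENNReal.ofReal (exp (C₂ * (n + 1) - s * n))) * μ (closedBall x (n + 1))
      ≤ ENNReal.ofReal (M₁ * exp (3 * (C₂ + C₄) - s) * exp (-(C₂ + C₄)) ^ n) := by
  split_ifs with hn
  · rw [zero_mul]; exact zero_le
  refine (mul_le_mul' le_rfl (hvol _ (by positivity))).trans ?_
  rw [← ENNReal.ofReal_mul (exp_pos _).le]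
  refine ENNReal.ofReal_le_ofReal ?_
  calc exp (C₂ * (n + 1) - s * n) * (M₁ * exp (C₄ * (n + 1)))
      = M₁ * exp ((C₂ + C₄) * (n + 1) - s * n) := by rw [mul_left_comm, ← exp_add]; ring_nf
    _ ≤ M₁ * (exp (3 * (C₂ + C₄) - s) * exp (-(C₂ + C₄)) ^ n) := by
      gcongr
      exact exp_mul_add_one_sub_mul_le hs hn
    _ = M₁ * exp (3 * (C₂ + C₄) - s) * exp (-(C₂ + C₄)) ^ n := (mul_assoc _ _ _).symm

theorem stmt9_general {M : Type*} [MeasurableSpace M] [PseudoMetricSpace M] (μ : Measure M)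
    (M₁ C₄ : ℝ) (hM₁ : 0 < M₁) (hC₄ : 0 < C₄)
    (hvol : ∀ (x : M) (r : ℝ), 0 ≤ r →
      μ (Metric.closedBall x r) ≤ ENNReal.ofReal (M₁ * Real.exp (C₄ * r)))
    (C₂ w : ℝ) (hC₂ : 0 ≤ C₂)
    (x : M) (c : M → ℝ) (hc01 : ∀ y, 0 ≤ c y ∧ c y ≤ 1)
    (hc1 : ∀ y ∈ Metric.ball x 1, c y = 1) :
    ∃ M₃ : ℝ, 0 < M₃ ∧ ∀ t : ℝ, 0 < t → 2 * (C₂ + C₄) < w / t →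
      ∫⁻ y, ENNReal.ofReal
          (Real.exp (C₂ * dist x y) * Real.exp (-(w / t) * dist x y) * (1 - c y)) ∂μ
        ≤ ENNReal.ofReal (M₃ * Real.exp (-(w / t))) := by
  set D := C₂ + C₄
  have hD : 0 < D := by positivity
  have hr : exp (-D) < 1 := exp_lt_one_iff.2 (neg_lt_zero.2 hD)
  have hr' : 0 < 1 - exp (-D) := sub_pos.2 hr
  refine ⟨M₁ * exp (3 * D) / (1 - exp (-D)), by positivity, fun t _ hst => ?_⟩
  set s := w / t
  calc _ ≤ _ := lintegral_le_tsum_mul_measure_closedBall μ x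
          (ofReal_exp_mul_exp_mul_one_sub_le hC₂ (by linarith) (fun y => (hc01 y).1) hc1)
    _ ≤ ∑' n : ℕ, ENNReal.ofReal (M₁ * exp (3 * D - s) * exp (-D) ^ n) :=
        ENNReal.tsum_le_tsum (ite_mul_measure_closedBall_le hM₁.le (hvol x) hst.le)
    _ = ENNReal.ofReal (M₁ * exp (3 * D) / (1 - exp (-D)) * exp (-s)) := by
        rw [tsum_ofReal_mul_geometric (by positivity) (exp_pos _).le hr, sub_eq_add_neg, exp_add]
        congr 1; ring

/-- Same setting as the exponential-volume-growth estimate, with a cutoff `c`, `0 ≤ c ≤ 1`,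
equal to `1` on the unit ball around `x`: the integral against `1 − c` is exponentially
small in `1/t`. -/
theorem stmt9 {M : Type*} [MeasurableSpace M] [PseudoMetricSpace M] (μ : Measure M)
    (M₁ C₄ : ℝ) (hM₁ : 0 < M₁) (hC₄ : 0 < C₄)
    (hvol : ∀ (x : M) (r : ℝ), 0 ≤ r →
      μ (Metric.closedBall x r) ≤ ENNReal.ofReal (M₁ * Real.exp (C₄ * r)))
    (C₂ w : ℝ) (hC₂ : 0 ≤ C₂) (hw : 0 < w)
    (x : M) (c : M → ℝ) (hc01 : ∀ y, 0 ≤ c y ∧ c y ≤ 1)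
    (hc1 : ∀ y ∈ Metric.ball x 1, c y = 1) :
    ∃ M₃ : ℝ, 0 < M₃ ∧ ∀ t : ℝ, 0 < t → 2 * (C₂ + C₄) < w / t →
      ∫⁻ y, ENNReal.ofReal
          (Real.exp (C₂ * dist x y) * Real.exp (-(w / t) * dist x y) * (1 - c y)) ∂μ
        ≤ ENNReal.ofReal (M₃ * Real.exp (-(w / t))) :=
  stmt9_general μ M₁ C₄ hM₁ hC₄ hvol C₂ w hC₂ x c hc01 hc1
end
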